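/- Let (𝒪,𝒜,T,e,≼) be a Direct Preference Process whose restriction of ≼ to Dist(Ω^e) is a total consistent preorder. For any two ≼-optimal policies π and π' and any attainable history h_t of length less than T, the optimal action sets coincide: 𝒜*_π(h_t) = 𝒜*_{π'}(h_t), where 𝒜*_π(h_t) = {a : D^π(h_t·a) ≽ D^π(h_t·a') for all a' ∈ 𝒜}. -/

import Mathlib

open Finset

/-- A history: an initial observation together with a list of action-observation pairs. -/
abbrev Hist (O A : Type*) := O × List (A × O)

/-- The length (time index) of a history. -/
def hlen {O A : Type*} (h : Hist O A) : ℕ := h.2.length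

/-- Append an action-observation pair to a history. -/
def hext {O A : Type*} (h : Hist O A) (a : A) (o : O) : Hist O A :=
  (h.1, h.2 ++ [(a, o)])

/-- The length-`t` prefix of a history/trajectory. -/
def hpre {O A : Type*} (h : Hist O A) (t : ℕ) : Hist O A := (h.1, h.2.take t)

section DPP

variable {O A : Type*} [Fintype O] [Fintype A] [DecidableEq O] [DecidableEq A]

/-- The finite set of all length-`T` histories (trajectories). -/
def trajFinset (O A : Type*) [Fintype O] [Fintype A] [DecidableEq O] [DecidableEq A]
    (T : ℕ) : Finset (Hist O A) :=
  Finset.image (fun p : O × (Fin T → A × O) => ((p.1, List.ofFn p.2) : Hist O A))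
    Finset.univ

/-- `π` is a policy: a distribution over actions for each history. -/
def IsPolicy (π : Hist O A → A → ℝ) : Prop :=
  ∀ h, (∀ a, 0 ≤ π h a) ∧ ∑ a, π h a = 1

/-- `(ρ0, ρ)` is an environment: an initial observation distribution and
history-dependent transition probabilities. -/
def IsEnv (ρ0 : O → ℝ) (ρ : Hist O A → A → O → ℝ) : Prop :=
  ((∀ o, 0 ≤ ρ0 o) ∧ ∑ o, ρ0 o = 1) ∧
    ∀ h a, (∀ o, 0 ≤ ρ h a o) ∧ ∑ o, ρ h a o = 1

/-- `Dpi ρ π n h` : the distribution over trajectories induced by starting at `h`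
(with `n` steps remaining) and following policy `π` in environment `ρ`. -/
noncomputable def Dpi (ρ : Hist O A → A → O → ℝ) (π : Hist O A → A → ℝ) :
    ℕ → Hist O A → Hist O A → ℝ
  | 0, h, ω => if ω = h then 1 else 0
  | n + 1, h, ω => ∑ a, π h a * ∑ o, ρ h a o * Dpi ρ π n (hext h a o) ω

/-- `D^π(h)` with horizon `T`. -/
noncomputable def DpiH (T : ℕ) (ρ : Hist O A → A → O → ℝ) (π : Hist O A → A → ℝ)
    (h : Hist O A) : Hist O A → ℝ :=
  Dpi ρ π (T - hlen h) h

/-- `D^π(h · a)` : take action `a` at `h`, then follow `π`. -/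
noncomputable def DpiA (T : ℕ) (ρ : Hist O A → A → O → ℝ) (π : Hist O A → A → ℝ)
    (h : Hist O A) (a : A) : Hist O A → ℝ :=
  fun ω => ∑ o, ρ h a o * Dpi ρ π (T - hlen h - 1) (hext h a o) ω

/-- Attainable histories in environment `(ρ0, ρ)`. -/
inductive Attainable (ρ0 : O → ℝ) (ρ : Hist O A → A → O → ℝ) : Hist O A → Prop
  | base (o : O) : 0 < ρ0 o → Attainable ρ0 ρ (o, ([] : List (A × O)))
  | step (h : Hist O A) (a : A) (o : O) :
      Attainable ρ0 ρ h → 0 < ρ h a o → Attainable ρ0 ρ (hext h a o)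

/-- A distribution over trajectories (length-`T` histories). -/
def IsTrajDist (T : ℕ) (D : Hist O A → ℝ) : Prop :=
  (∀ ω, 0 ≤ D ω) ∧ (∀ ω, D ω ≠ 0 → hlen ω = T) ∧
    ∑ ω ∈ trajFinset O A T, D ω = 1

/-- A distribution over the attainable trajectories `Ω^e`. -/
def IsAttDist (T : ℕ) (ρ0 : O → ℝ) (ρ : Hist O A → A → O → ℝ)
    (D : Hist O A → ℝ) : Prop :=
  IsTrajDist T D ∧ ∀ ω, D ω ≠ 0 → Attainable ρ0 ρ ω

/-- Pointwise convex combination. -/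
def mix {X : Type*} (α : ℝ) (A B : X → ℝ) : X → ℝ :=
  fun x => α * A x + (1 - α) * B x

/-- The restriction of `R` to `Dist(Ω^e)` is a total consistent preorder. -/
def RestrTotalConsistentPreorder (T : ℕ) (ρ0 : O → ℝ)
    (ρ : Hist O A → A → O → ℝ) (R : (Hist O A → ℝ) → (Hist O A → ℝ) → Prop) : Prop :=
  (∀ D, IsAttDist T ρ0 ρ D → R D D) ∧
  (∀ D₁ D₂ D₃, IsAttDist T ρ0 ρ D₁ → IsAttDist T ρ0 ρ D₂ → IsAttDist T ρ0 ρ D₃ →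
    R D₁ D₂ → R D₂ D₃ → R D₁ D₃) ∧
  (∀ D₁ D₂, IsAttDist T ρ0 ρ D₁ → IsAttDist T ρ0 ρ D₂ → (R D₁ D₂ ∨ R D₂ D₁)) ∧
  (∀ α : ℝ, 0 < α → α < 1 → ∀ D₁ D₂ D₃, IsAttDist T ρ0 ρ D₁ →
    IsAttDist T ρ0 ρ D₂ → IsAttDist T ρ0 ρ D₃ →
    R D₁ D₂ → R (mix α D₁ D₃) (mix α D₂ D₃))

/-- `π` is a `≼`-optimal policy. -/
def OptimalPolicy (T : ℕ) (ρ0 : O → ℝ) (ρ : Hist O A → A → O → ℝ)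
    (R : (Hist O A → ℝ) → (Hist O A → ℝ) → Prop) (π : Hist O A → A → ℝ) : Prop :=
  ∀ h, Attainable ρ0 ρ h → hlen h ≤ T →
    ∀ π', IsPolicy π' → R (DpiH T ρ π' h) (DpiH T ρ π h)

/-- The optimal action set of policy `π` at history `h`. -/
def OptActions (T : ℕ) (ρ : Hist O A → A → O → ℝ)
    (R : (Hist O A → ℝ) → (Hist O A → ℝ) → Prop) (π : Hist O A → A → ℝ)
    (h : Hist O A) : Set A :=
  {a | ∀ a', R (DpiA T ρ π h a') (DpiA T ρ π h a)}

end DPP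

/-! For every policy `σ` and optimal `τ`, optimality of `τ` at the attainable successors
`h·(a,o)` gives `D^σ(h·(a,o)) ≼ D^τ(h·(a,o))`. Since `D^σ(h·a)` is the `ρ(·|h,a)`-mixture of
these, consistency (extended from two-point to finite mixtures) yields `D^σ(h·a) ≼ D^τ(h·a)`.
For two optimal policies this holds in both directions, so `D^π(h·a)` and `D^π'(h·a)` are
equivalent for every action `a`, and by transitivity both policies have the same maximal actions. -/

theorem hlen_hext {O A : Type*} (h : Hist O A) (a : A) (o : O) :
    hlen (hext h a o) = hlen h + 1 := by
  simp [hlen, hext]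

theorem sum_cons_mul_eq_mix {ι X : Type*} {s : Finset ι} {a : ι} (ha : a ∉ s) {w : ι → ℝ}
    (hw : ∑ i ∈ s.cons a ha, w i = 1) (hs : ∑ i ∈ s, w i ≠ 0) (f : ι → X → ℝ) :
    (fun x => ∑ i ∈ s.cons a ha, w i * f i x) =
      mix (w a) (f a) (fun x => ∑ i ∈ s, w i / (∑ j ∈ s, w j) * f i x) := by
  rw [sum_cons] at hw
  funext x
  simp only [sum_cons, mix, mul_sum]
  congr 1
  refine sum_congr rfl fun i _ => ?_
  rw [show 1 - w a = ∑ j ∈ s, w j by linarith]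
  field_simp

section DPP

variable {O A : Type*} [Fintype O] [Fintype A] [DecidableEq O] [DecidableEq A]
  {T : ℕ} {ρ0 : O → ℝ} {ρ : Hist O A → A → O → ℝ}

theorem mem_trajFinset {ω : Hist O A} : ω ∈ trajFinset O A T ↔ hlen ω = T := by
  obtain ⟨o, l⟩ := ω
  simp only [trajFinset, mem_image, mem_univ, true_and, hlen]
  constructor
  · rintro ⟨p, hp⟩
    rw [← (Prod.mk.inj hp).2]
    simp
  · rintro rfl
    exact ⟨(o, l.get), by simp⟩

theorem isAttDist_sum_mul {ι : Type*} (s : Finset ι) {w : ι → ℝ} {D : ι → Hist O A → ℝ}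
    (hw0 : ∀ i ∈ s, 0 ≤ w i) (hw1 : ∑ i ∈ s, w i = 1)
    (hD : ∀ i ∈ s, 0 < w i → IsAttDist T ρ0 ρ (D i)) :
    IsAttDist T ρ0 ρ (fun ω => ∑ i ∈ s, w i * D i ω) := by
  have hterm : ∀ i ∈ s,
      (∀ ω, 0 ≤ w i * D i ω) ∧ ∑ ω ∈ trajFinset O A T, w i * D i ω = w i := by
    intro i hi
    rcases (hw0 i hi).eq_or_lt with hzero | hpos
    · simp [← hzero]
    · exact ⟨fun ω => mul_nonneg hpos.le ((hD i hi hpos).1.1 ω),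
        by rw [← mul_sum, (hD i hi hpos).1.2.2, mul_one]⟩
  have hsupp : ∀ ω, ∑ i ∈ s, w i * D i ω ≠ 0 →
      ∃ i ∈ s, IsAttDist T ρ0 ρ (D i) ∧ D i ω ≠ 0 := by
    intro ω hω
    obtain ⟨i, hi, hne⟩ := exists_ne_zero_of_sum_ne_zero hω
    exact ⟨i, hi, hD i hi ((hw0 i hi).lt_of_ne' (left_ne_zero_of_mul hne)),
      right_ne_zero_of_mul hne⟩
  refine ⟨⟨fun ω => sum_nonneg fun i hi => (hterm i hi).1 ω, fun ω hω => ?_, ?_⟩,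
    fun ω hω => ?_⟩
  · obtain ⟨i, -, hDi, hne⟩ := hsupp ω hω
    exact hDi.1.2.1 ω hne
  · rw [sum_comm, ← hw1]
    exact sum_congr rfl fun i hi => (hterm i hi).2
  · obtain ⟨i, -, hDi, hne⟩ := hsupp ω hω
    exact hDi.2 ω hne

theorem isAttDist_mix {α : ℝ} (hα0 : 0 < α) (hα1 : α < 1) {D₁ D₂ : Hist O A → ℝ}
    (hD₁ : IsAttDist T ρ0 ρ D₁) (hD₂ : IsAttDist T ρ0 ρ D₂) :
    IsAttDist T ρ0 ρ (mix α D₁ D₂) := by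
  have h := isAttDist_sum_mul (T := T) (ρ0 := ρ0) (ρ := ρ) univ (w := ![α, 1 - α])
    (D := ![D₁, D₂]) (by simp [Fin.forall_fin_two, hα0.le, hα1.le]) (by simp)
    (by simp [Fin.forall_fin_two, hD₁, hD₂])
  show IsAttDist T ρ0 ρ fun ω => α * D₁ ω + (1 - α) * D₂ ω
  simpa using h

theorem isAttDist_dpi {π : Hist O A → A → ℝ} (henv : IsEnv ρ0 ρ) (hπ : IsPolicy π) :
    ∀ (n : ℕ) (h : Hist O A), Attainable ρ0 ρ h → hlen h + n = T →
      IsAttDist T ρ0 ρ (Dpi ρ π n h)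
  | 0, h, hatt, hn => by
    refine ⟨⟨fun ω => ?_, fun ω hω => ?_, ?_⟩, fun ω hω => ?_⟩
    · simp only [Dpi]
      split_ifs <;> norm_num
    · simp only [Dpi, ne_eq, ite_eq_right_iff, not_forall] at hω
      rw [hω.1]
      omega
    · simp only [Dpi, sum_ite_eq', mem_trajFinset.2 (show hlen h = T by omega), if_true]
    · simp only [Dpi, ne_eq, ite_eq_right_iff, not_forall] at hω
      rwa [hω.1]
  | n + 1, h, hatt, hn => by
    have hstep : ∀ a, IsAttDist T ρ0 ρ (fun ω => ∑ o, ρ h a o * Dpi ρ π n (hext h a o) ω) :=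
      fun a => isAttDist_sum_mul univ (fun o _ => (henv.2 h a).1 o) (henv.2 h a).2
        fun o _ hρ => isAttDist_dpi henv hπ n _ (hatt.step h a o hρ) (by rw [hlen_hext]; omega)
    exact isAttDist_sum_mul univ (fun a _ => (hπ h).1 a) (hπ h).2 fun a _ _ => hstep a

theorem isAttDist_dpiH {π : Hist O A → A → ℝ} (henv : IsEnv ρ0 ρ) (hπ : IsPolicy π)
    {h : Hist O A} (hatt : Attainable ρ0 ρ h) (hle : hlen h ≤ T) :
    IsAttDist T ρ0 ρ (DpiH T ρ π h) :=
  isAttDist_dpi henv hπ _ h hatt (by omega)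

theorem dpiA_eq_sum_dpiH (π : Hist O A → A → ℝ) (h : Hist O A) (a : A) :
    DpiA T ρ π h a = fun ω => ∑ o, ρ h a o * DpiH T ρ π (hext h a o) ω := by
  funext ω
  simp only [DpiA, DpiH, hlen_hext, Nat.sub_sub]

theorem isAttDist_dpiA {π : Hist O A → A → ℝ} (henv : IsEnv ρ0 ρ) (hπ : IsPolicy π)
    {h : Hist O A} (hatt : Attainable ρ0 ρ h) (hlt : hlen h < T) (a : A) :
    IsAttDist T ρ0 ρ (DpiA T ρ π h a) := by
  rw [dpiA_eq_sum_dpiH]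
  exact isAttDist_sum_mul univ (fun o _ => (henv.2 h a).1 o) (henv.2 h a).2
    fun o _ hρ => isAttDist_dpiH henv hπ (hatt.step h a o hρ) (by rw [hlen_hext]; omega)

variable {R : (Hist O A → ℝ) → (Hist O A → ℝ) → Prop}

theorem RestrTotalConsistentPreorder.rel_mix_mix (hR : RestrTotalConsistentPreorder T ρ0 ρ R)
    {α : ℝ} (hα0 : 0 < α) (hα1 : α < 1) {D₁ D₂ E₁ E₂ : Hist O A → ℝ}
    (hD₁ : IsAttDist T ρ0 ρ D₁) (hD₂ : IsAttDist T ρ0 ρ D₂)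
    (hE₁ : IsAttDist T ρ0 ρ E₁) (hE₂ : IsAttDist T ρ0 ρ E₂)
    (h₁ : R D₁ E₁) (h₂ : R D₂ E₂) : R (mix α D₁ D₂) (mix α E₁ E₂) := by
  have mix_comm : ∀ X Y : Hist O A → ℝ, mix α X Y = mix (1 - α) Y X := fun X Y => by
    funext ω
    simp only [mix]
    ring
  have hleft : R (mix α D₁ D₂) (mix α E₁ D₂) := hR.2.2.2 α hα0 hα1 _ _ _ hD₁ hE₁ hD₂ h₁
  have hright : R (mix α E₁ D₂) (mix α E₁ E₂) := by
    rw [mix_comm E₁ D₂, mix_comm E₁ E₂]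
    exact hR.2.2.2 (1 - α) (by linarith) (by linarith) _ _ _ hD₂ hE₂ hE₁ h₂
  exact hR.2.1 _ _ _ (isAttDist_mix hα0 hα1 hD₁ hD₂) (isAttDist_mix hα0 hα1 hE₁ hD₂)
    (isAttDist_mix hα0 hα1 hE₁ hE₂) hleft hright

theorem RestrTotalConsistentPreorder.rel_sum_mul_of_pos
    (hR : RestrTotalConsistentPreorder T ρ0 ρ R) {ι : Type*} {s : Finset ι} (hs : s.Nonempty)
    {w : ι → ℝ} (hw0 : ∀ i ∈ s, 0 < w i) (hw1 : ∑ i ∈ s, w i = 1) {D E : ι → Hist O A → ℝ}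
    (hD : ∀ i ∈ s, IsAttDist T ρ0 ρ (D i)) (hE : ∀ i ∈ s, IsAttDist T ρ0 ρ (E i))
    (hDE : ∀ i ∈ s, R (D i) (E i)) :
    R (fun ω => ∑ i ∈ s, w i * D i ω) (fun ω => ∑ i ∈ s, w i * E i ω) := by
  induction hs using Finset.Nonempty.cons_induction generalizing w with
  | singleton a =>
    rw [sum_singleton] at hw1
    simpa [hw1] using hDE a (mem_singleton_self a)
  | cons a s ha hs ih =>
    simp only [mem_cons, forall_eq_or_imp] at hw0 hD hE hDE
    have hβ : 0 < ∑ i ∈ s, w i := sum_pos hw0.2 hs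
    have hwa : w a < 1 := by rw [sum_cons] at hw1; linarith
    have hv0 : ∀ i ∈ s, 0 < w i / ∑ j ∈ s, w j := fun i hi => div_pos (hw0.2 i hi) hβ
    have hv1 : ∑ i ∈ s, w i / ∑ j ∈ s, w j = 1 := by rw [← sum_div, div_self hβ.ne']
    have hnorm : ∀ F : ι → Hist O A → ℝ, (∀ i ∈ s, IsAttDist T ρ0 ρ (F i)) →
        IsAttDist T ρ0 ρ (fun ω => ∑ i ∈ s, w i / (∑ j ∈ s, w j) * F i ω) :=
      fun F hF => isAttDist_sum_mul s (fun i hi => (hv0 i hi).le) hv1 fun i hi _ => hF i hi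
    rw [sum_cons_mul_eq_mix ha hw1 hβ.ne', sum_cons_mul_eq_mix ha hw1 hβ.ne']
    exact hR.rel_mix_mix hw0.1 hwa hD.1 (hnorm D hD.2) hE.1 (hnorm E hE.2) hDE.1
      (ih hv0 hv1 hD.2 hE.2 hDE.2)

theorem RestrTotalConsistentPreorder.rel_sum_mul
    (hR : RestrTotalConsistentPreorder T ρ0 ρ R) {ι : Type*} (s : Finset ι)
    {w : ι → ℝ} (hw0 : ∀ i ∈ s, 0 ≤ w i) (hw1 : ∑ i ∈ s, w i = 1) {D E : ι → Hist O A → ℝ}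
    (hD : ∀ i ∈ s, 0 < w i → IsAttDist T ρ0 ρ (D i))
    (hE : ∀ i ∈ s, 0 < w i → IsAttDist T ρ0 ρ (E i))
    (hDE : ∀ i ∈ s, 0 < w i → R (D i) (E i)) :
    R (fun ω => ∑ i ∈ s, w i * D i ω) (fun ω => ∑ i ∈ s, w i * E i ω) := by
  classical
  -- Zero-weight components need not be distributions on `Ω^e`, so they are discarded first.
  have hpos : ∀ i ∈ s, w i ≠ 0 → 0 < w i := fun i hi hne => (hw0 i hi).lt_of_ne' hne
  have hfilter : ∀ F : ι → Hist O A → ℝ,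
      (fun ω => ∑ i ∈ s with 0 < w i, w i * F i ω) = fun ω => ∑ i ∈ s, w i * F i ω :=
    fun F => funext fun ω => sum_filter_of_ne fun i hi hne => hpos i hi (left_ne_zero_of_mul hne)
  have hw1' : ∑ i ∈ s with 0 < w i, w i = 1 := by rwa [sum_filter_of_ne hpos]
  rw [← hfilter D, ← hfilter E]
  refine hR.rel_sum_mul_of_pos (nonempty_of_sum_ne_zero (hw1'.symm ▸ one_ne_zero)) ?_ hw1'
    ?_ ?_ ?_ <;> intro i hi <;> obtain ⟨hi, hwi⟩ := mem_filter.1 hi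
  exacts [hwi, hD i hi hwi, hE i hi hwi, hDE i hi hwi]

theorem RestrTotalConsistentPreorder.rel_dpiA_of_optimal
    (hR : RestrTotalConsistentPreorder T ρ0 ρ R) (henv : IsEnv ρ0 ρ)
    {σ τ : Hist O A → A → ℝ} (hσ : IsPolicy σ) (hτ : IsPolicy τ)
    (hoptτ : OptimalPolicy T ρ0 ρ R τ) {h : Hist O A} (hatt : Attainable ρ0 ρ h)
    (hlt : hlen h < T) (a : A) :
    R (DpiA T ρ σ h a) (DpiA T ρ τ h a) := by
  have hle : ∀ o, hlen (hext h a o) ≤ T := fun o => by rw [hlen_hext]; omega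
  rw [dpiA_eq_sum_dpiH, dpiA_eq_sum_dpiH]
  exact hR.rel_sum_mul univ (fun o _ => (henv.2 h a).1 o) (henv.2 h a).2
    (fun o _ hρ => isAttDist_dpiH henv hσ (hatt.step h a o hρ) (hle o))
    (fun o _ hρ => isAttDist_dpiH henv hτ (hatt.step h a o hρ) (hle o))
    (fun o _ hρ => hoptτ _ (hatt.step h a o hρ) (hle o) σ hσ)

theorem RestrTotalConsistentPreorder.optActions_subset_of_optimal
    (hR : RestrTotalConsistentPreorder T ρ0 ρ R) (henv : IsEnv ρ0 ρ)
    {σ τ : Hist O A → A → ℝ} (hσ : IsPolicy σ) (hτ : IsPolicy τ)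
    (hoptσ : OptimalPolicy T ρ0 ρ R σ) (hoptτ : OptimalPolicy T ρ0 ρ R τ)
    {h : Hist O A} (hatt : Attainable ρ0 ρ h) (hlt : hlen h < T) :
    OptActions T ρ R σ h ⊆ OptActions T ρ R τ h := by
  intro a ha b
  have hdist := fun {π} (hπ : IsPolicy π) c => isAttDist_dpiA henv hπ hatt hlt c
  exact hR.2.1 _ _ _ (hdist hτ b) (hdist hσ b) (hdist hτ a)
    (hR.rel_dpiA_of_optimal henv hτ hσ hoptσ hatt hlt b)
    (hR.2.1 _ _ _ (hdist hσ b) (hdist hσ a) (hdist hτ a) (ha b)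
      (hR.rel_dpiA_of_optimal henv hσ hτ hoptτ hatt hlt a))

end DPP

theorem optActions_eq_of_optimal_general {O A : Type*} [Fintype O] [Fintype A]
    [DecidableEq O] [DecidableEq A]
    (T : ℕ) (ρ0 : O → ℝ) (ρ : Hist O A → A → O → ℝ) (henv : IsEnv ρ0 ρ)
    (R : (Hist O A → ℝ) → (Hist O A → ℝ) → Prop)
    (hR : RestrTotalConsistentPreorder T ρ0 ρ R)
    (π π' : Hist O A → A → ℝ) (hπ : IsPolicy π) (hπ' : IsPolicy π')
    (hopt : OptimalPolicy T ρ0 ρ R π) (hopt' : OptimalPolicy T ρ0 ρ R π')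
    (h : Hist O A) (hatt : Attainable ρ0 ρ h) (hlt : hlen h < T) :
    OptActions T ρ R π h = OptActions T ρ R π' h :=
  (hR.optActions_subset_of_optimal henv hπ hπ' hopt hopt' hatt hlt).antisymm
    (hR.optActions_subset_of_optimal henv hπ' hπ hopt' hopt hatt hlt)

/-- optimal action sets agree across optimal policies. -/
theorem optActions_eq_of_optimal {O A : Type*} [Fintype O] [Fintype A]
    [DecidableEq O] [DecidableEq A] [Nonempty O] [Nonempty A]
    (T : ℕ) (ρ0 : O → ℝ) (ρ : Hist O A → A → O → ℝ) (henv : IsEnv ρ0 ρ)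
    (R : (Hist O A → ℝ) → (Hist O A → ℝ) → Prop)
    (hR : RestrTotalConsistentPreorder T ρ0 ρ R)
    (π π' : Hist O A → A → ℝ) (hπ : IsPolicy π) (hπ' : IsPolicy π')
    (hopt : OptimalPolicy T ρ0 ρ R π) (hopt' : OptimalPolicy T ρ0 ρ R π')
    (h : Hist O A) (hatt : Attainable ρ0 ρ h) (hlt : hlen h < T) :
    OptActions T ρ R π h = OptActions T ρ R π' h :=
  optActions_eq_of_optimal_general T ρ0 ρ henv R hR π π' hπ hπ' hopt hopt' h hatt hlt
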